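/- arXiv:2111.13613 — 2 statements merged into one kernel-verified Lean document; each statement's English description precedes it below -/
import Mathlib

section
/- For any Borel set B ⊆ X, the adversarial risk decomposes as E_{(x,y)∼μ}[sup_{x̃∈B_ε(x)} |1_B(x̃) − y|] = E_{(x,y)∼μ}[|1_B(x) − y|] + ε·P̃er_ε(B;μ), where P̃er_ε(B;μ) := (w₀/ε)∫_X (sup_{x̃∈B_ε(x)} 1_B(x̃) − 1_B(x)) dρ₀(x) + (w₁/ε)∫_X (1_B(x) − inf_{x̃∈B_ε(x)} 1_B(x̃)) dρ₁(x). -/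
/-! The loss `|1_B - y|` is the indicator of `B` (for `y = 0`) or of `Bᶜ` (for `y = 1`), and the
supremum of an indicator `1_A` over the open ball `B_ε(x)` is the indicator of the open
`ε`-thickening `A^ε` at `x`, while its infimum is `1 - 1_{(Aᶜ)^ε}(x)`. Hence every integrand is an
indicator of a measurable set, both sides reduce to
`w₀ ρ₀(B^ε) + w₁ ρ₁((Bᶜ)^ε)`, and the identity is linear arithmetic. -/

open Set Metric MeasureTheory

section Indicator

variable {α : Type*} {A S : Set α}

open Classical in
lemma sSup_image_indicator_one (hS : S.Nonempty) :
    sSup (A.indicator (fun _ => (1 : ℝ)) '' S) = if (S ∩ A).Nonempty then 1 else 0 := by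
  split_ifs with hSA
  · obtain ⟨z, hzS, hzA⟩ := hSA
    refine IsGreatest.csSup_eq ⟨⟨z, hzS, indicator_of_mem hzA _⟩, ?_⟩
    rintro _ ⟨y, -, rfl⟩
    exact indicator_le_self' (fun _ _ => zero_le_one) y
  · have hzero : EqOn (A.indicator fun _ => (1 : ℝ)) (fun _ => 0) S := fun y hy =>
      indicator_of_notMem (fun hyA => hSA ⟨y, hy, hyA⟩) _
    rw [hzero.image_eq, hS.image_const, csSup_singleton]

open Classical in
lemma sInf_image_indicator_one (hS : S.Nonempty) :
    sInf (A.indicator (fun _ => (1 : ℝ)) '' S) = if (S ∩ Aᶜ).Nonempty then 0 else 1 := by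
  split_ifs with hSA
  · obtain ⟨z, hzS, hzA⟩ := hSA
    refine IsLeast.csInf_eq ⟨⟨z, hzS, indicator_of_notMem hzA _⟩, ?_⟩
    rintro _ ⟨y, -, rfl⟩
    exact indicator_nonneg (fun _ _ => zero_le_one) y
  · have hone : EqOn (A.indicator fun _ => (1 : ℝ)) (fun _ => 1) S := fun y hy =>
      indicator_of_mem (not_not.mp fun hyA => hSA ⟨y, hy, hyA⟩) _
    rw [hone.image_eq, hS.image_const, csInf_singleton]

lemma abs_indicator_one_sub_ite (A : Set α) (b : Bool) (x : α) :
    |A.indicator (fun _ => (1 : ℝ)) x - (if b then 1 else 0)| =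
      (if b then Aᶜ else A).indicator (fun _ => 1) x := by
  cases b <;> by_cases hx : x ∈ A <;> simp [hx]

end Indicator

section Thickening

variable {X : Type*} [PseudoMetricSpace X] {ε : ℝ}

lemma ball_inter_nonempty_iff_mem_thickening {A : Set X} {x : X} :
    (ball x ε ∩ A).Nonempty ↔ x ∈ thickening ε A := by
  simp [mem_thickening_iff, Set.Nonempty, dist_comm, and_comm]

lemma sSup_indicator_image_ball (hε : 0 < ε) (A : Set X) (x : X) :
    sSup (A.indicator (fun _ => (1 : ℝ)) '' ball x ε) =
      (thickening ε A).indicator (fun _ => 1) x := by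
  classical
  rw [sSup_image_indicator_one (nonempty_ball.2 hε), indicator_apply,
    ball_inter_nonempty_iff_mem_thickening]

lemma sInf_indicator_image_ball (hε : 0 < ε) (A : Set X) (x : X) :
    sInf (A.indicator (fun _ => (1 : ℝ)) '' ball x ε) =
      1 - (thickening ε Aᶜ).indicator (fun _ => 1) x := by
  classical
  rw [sInf_image_indicator_one (nonempty_ball.2 hε), indicator_apply,
    ball_inter_nonempty_iff_mem_thickening]
  split_ifs <;> norm_num

end Thickening

section Mixture

variable {X : Type*} [MeasurableSpace X] (ρ₀ ρ₁ : Measure X) (w₀ w₁ : NNReal)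

lemma integral_bool_mixture {g : X × Bool → ℝ}
    (hg₀ : Integrable (fun x => g (x, false)) ρ₀) (hg₁ : Integrable (fun x => g (x, true)) ρ₁) :
    ∫ p, g p ∂((w₀ : ENNReal) • (ρ₀.map fun x => (x, false)) +
        (w₁ : ENNReal) • (ρ₁.map fun x => (x, true))) =
      w₀ * ∫ x, g (x, false) ∂ρ₀ + w₁ * ∫ x, g (x, true) ∂ρ₁ := by
  have he₀ := measurableEmbedding_prod_mk_right (α := Bool) (β := X) false
  have he₁ := measurableEmbedding_prod_mk_right (α := Bool) (β := X) true
  rw [integral_add_measure ((he₀.integrable_map_iff.2 hg₀).smul_measure ENNReal.coe_ne_top)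
      ((he₁.integrable_map_iff.2 hg₁).smul_measure ENNReal.coe_ne_top),
    integral_smul_measure, integral_smul_measure, he₀.integral_map, he₁.integral_map]
  simp

lemma integral_indicator_ite_bool_mixture [IsFiniteMeasure ρ₀] [IsFiniteMeasure ρ₁]
    {S₀ S₁ : Set X} (hS₀ : MeasurableSet S₀) (hS₁ : MeasurableSet S₁) :
    ∫ p, (if p.2 then S₁ else S₀).indicator (fun _ => (1 : ℝ)) p.1
        ∂((w₀ : ENNReal) • (ρ₀.map fun x => (x, false)) +
          (w₁ : ENNReal) • (ρ₁.map fun x => (x, true))) =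
      w₀ * ρ₀.real S₀ + w₁ * ρ₁.real S₁ := by
  rw [integral_bool_mixture ρ₀ ρ₁ w₀ w₁ ((integrable_const 1).indicator hS₀)
    ((integrable_const 1).indicator hS₁)]
  simp [integral_indicator_const _ hS₀, integral_indicator_const _ hS₁]

end Mixture

theorem advRisk_eq_risk_add_preperimeter_general {X : Type*} [MetricSpace X] [MeasurableSpace X]
    [BorelSpace X]
    (ρ₀ ρ₁ : Measure X) [IsProbabilityMeasure ρ₀] [IsProbabilityMeasure ρ₁]
    (w₀ w₁ : NNReal)
    -- the joint distribution `μ` on `X × {0,1}` with class weights `wᵢ` and conditionals `ρᵢ`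
    (μ : Measure (X × Bool))
    (hμ : μ = (w₀ : ENNReal) • (ρ₀.map fun x => (x, false)) +
              (w₁ : ENNReal) • (ρ₁.map fun x => (x, true)))
    (ε : ℝ) (hε : 0 < ε) (B : Set X) (hB : MeasurableSet B) :
    (∫ p, sSup ((fun xt => |B.indicator (fun _ => (1 : ℝ)) xt - (if p.2 then 1 else 0)|) ''
        ball p.1 ε) ∂μ) =
    (∫ p, |B.indicator (fun _ => (1 : ℝ)) p.1 - (if p.2 then 1 else 0)| ∂μ) +
      ε * (((w₀ : ℝ) / ε) *
            ∫ x, (sSup (B.indicator (fun _ => (1 : ℝ)) '' ball x ε) -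
              B.indicator (fun _ => (1 : ℝ)) x) ∂ρ₀ +
          ((w₁ : ℝ) / ε) *
            ∫ x, (B.indicator (fun _ => (1 : ℝ)) x -
              sInf (B.indicator (fun _ => (1 : ℝ)) '' ball x ε)) ∂ρ₁) := by
  subst hμ
  have hB₀ : MeasurableSet (thickening ε B) := isOpen_thickening.measurableSet
  have hB₁ : MeasurableSet (thickening ε Bᶜ) := isOpen_thickening.measurableSet
  have hint {ρ : Measure X} [IsFiniteMeasure ρ] {S : Set X} (hS : MeasurableSet S) :
      Integrable (S.indicator fun _ => (1 : ℝ)) ρ := (integrable_const 1).indicator hS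
  simp_rw [abs_indicator_one_sub_ite, sSup_indicator_image_ball hε,
    sInf_indicator_image_ball hε, apply_ite (thickening ε)]
  have hcompl (x : X) : B.indicator (fun _ => (1 : ℝ)) x -
      (1 - (thickening ε Bᶜ).indicator (fun _ => 1) x) =
      (thickening ε Bᶜ).indicator (fun _ => 1) x - Bᶜ.indicator (fun _ => 1) x := by
    rw [indicator_compl, Pi.sub_apply]
    ring
  rw [integral_indicator_ite_bool_mixture _ _ _ _ hB₀ hB₁,
    integral_indicator_ite_bool_mixture _ _ _ _ hB hB.compl, integral_congr_ae (.of_forall hcompl),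
    integral_sub (hint hB₀) (hint hB), integral_sub (hint hB₁) (hint hB.compl),
    integral_indicator_const _ hB₀, integral_indicator_const _ hB,
    integral_indicator_const _ hB₁, integral_indicator_const _ hB.compl]
  field_simp
  ring

theorem advRisk_eq_risk_add_preperimeter {X : Type*} [MetricSpace X] [MeasurableSpace X]
    [BorelSpace X] [TopologicalSpace.SeparableSpace X]
    (ρ₀ ρ₁ : Measure X) [IsProbabilityMeasure ρ₀] [IsProbabilityMeasure ρ₁]
    (w₀ w₁ : NNReal) (hw : w₀ + w₁ = 1)
    -- the joint distribution `μ` on `X × {0,1}` with class weights `wᵢ` and conditionals `ρᵢ`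
    (μ : Measure (X × Bool))
    (hμ : μ = (w₀ : ENNReal) • (ρ₀.map fun x => (x, false)) +
              (w₁ : ENNReal) • (ρ₁.map fun x => (x, true)))
    (ε : ℝ) (hε : 0 < ε) (B : Set X) (hB : MeasurableSet B) :
    (∫ p, sSup ((fun xt => |B.indicator (fun _ => (1 : ℝ)) xt - (if p.2 then 1 else 0)|) ''
        ball p.1 ε) ∂μ) =
    (∫ p, |B.indicator (fun _ => (1 : ℝ)) p.1 - (if p.2 then 1 else 0)| ∂μ) +
      ε * (((w₀ : ℝ) / ε) *
            ∫ x, (sSup (B.indicator (fun _ => (1 : ℝ)) '' ball x ε) -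
              B.indicator (fun _ => (1 : ℝ)) x) ∂ρ₀ +
          ((w₁ : ℝ) / ε) *
            ∫ x, (B.indicator (fun _ => (1 : ℝ)) x -
              sInf (B.indicator (fun _ => (1 : ℝ)) '' ball x ε)) ∂ρ₁) :=
  advRisk_eq_risk_add_preperimeter_general ρ₀ ρ₁ w₀ w₁ μ hμ ε hε B hB
end

section
/- Let A be a minimizer of the adversarial risk R̃_ε and let B be a Borel set satisfying op_ε(A) ⊆ B ⊆ cl_ε(A). Then B is also a minimizer of R̃_ε. -/
/-! Dilation and erosion form a Galois connection, so `(cl_ε A)^ε = A^ε` and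
`(op_ε A)^{−ε} = A^{−ε}`. Hence any `B` with `op_ε(A) ⊆ B ⊆ cl_ε(A)` has `B^ε ⊆ A^ε` and `A^{−ε} ⊆ B^{−ε}`,
and since the risk is monotone in both, `R̃_ε(B) ≤ R̃_ε(A)`. -/

open Set Metric MeasureTheory

/-- The dilation `A^ε = {x : dist(x,A) < ε}`. -/
noncomputable def dilation {X : Type*} [PseudoMetricSpace X] (ε : ℝ) (A : Set X) : Set X :=
  Metric.thickening ε A

/-- The erosion `A^{−ε} = {x : dist(x,Aᶜ) ≥ ε}`. -/
noncomputable def erosion {X : Type*} [PseudoMetricSpace X] (ε : ℝ) (A : Set X) : Set X :=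
  {x | ENNReal.ofReal ε ≤ EMetric.infEdist x Aᶜ}

/-- The closing `cl_ε(A) = (A^ε)^{−ε}`. -/
noncomputable def closing {X : Type*} [PseudoMetricSpace X] (ε : ℝ) (A : Set X) : Set X :=
  erosion ε (dilation ε A)

/-- The opening `op_ε(A) = (A^{−ε})^ε`. -/
noncomputable def opening {X : Type*} [PseudoMetricSpace X] (ε : ℝ) (A : Set X) : Set X :=
  dilation ε (erosion ε A)

/-- The adversarial risk in morphological form
`R̃_ε(A) = w₀ ρ₀(A^ε) + w₁(1 − ρ₁(A^{−ε}))`. -/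
noncomputable def morphRisk {X : Type*} [PseudoMetricSpace X] [MeasurableSpace X]
    (ρ₀ ρ₁ : Measure X) (w₀ w₁ ε : ℝ) (A : Set X) : ℝ :=
  w₀ * (ρ₀ (dilation ε A)).toReal + w₁ * (1 - (ρ₁ (erosion ε A)).toReal)

section Morphology

variable {X : Type*} [PseudoMetricSpace X]

/-- Both sides say that every open `ε`-ball centred in `A` lies in `B`. -/
theorem dilation_erosion_gc (ε : ℝ) :
    GaloisConnection (dilation ε : Set X → Set X) (erosion ε) := by
  intro A B
  constructor
  · intro hAB a ha
    refine le_infEDist.mpr fun y hy => not_lt.mp fun hay => hy (hAB ?_)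
    exact (mem_thickening_iff_exists_edist_lt _ _).mpr ⟨a, ha, by rwa [edist_comm]⟩
  · intro hAB x hx
    obtain ⟨a, ha, hxa⟩ := (mem_thickening_iff_exists_edist_lt _ _).mp hx
    by_contra hxB
    have hle : infEDist a Bᶜ ≤ edist a x := infEDist_le_edist_of_mem hxB
    rw [edist_comm] at hle
    exact (hAB ha).not_gt (hle.trans_lt hxa)

theorem dilation_closing (ε : ℝ) (A : Set X) : dilation ε (closing ε A) = dilation ε A :=
  (dilation_erosion_gc ε).l_u_l_eq_l A

theorem erosion_opening (ε : ℝ) (A : Set X) : erosion ε (opening ε A) = erosion ε A :=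
  (dilation_erosion_gc ε).u_l_u_eq_u A

end Morphology

theorem morphRisk_le_of_dilation_subset_of_erosion_subset {X : Type*} [PseudoMetricSpace X]
    [MeasurableSpace X] {ρ₀ ρ₁ : Measure X} [IsFiniteMeasure ρ₀] [IsFiniteMeasure ρ₁]
    {w₀ w₁ : ℝ} (hw₀ : 0 ≤ w₀) (hw₁ : 0 ≤ w₁) {ε : ℝ} {A B : Set X}
    (hdil : dilation ε B ⊆ dilation ε A) (hero : erosion ε A ⊆ erosion ε B) :
    morphRisk ρ₀ ρ₁ w₀ w₁ ε B ≤ morphRisk ρ₀ ρ₁ w₀ w₁ ε A := by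
  have h₀ : (ρ₀ (dilation ε B)).toReal ≤ (ρ₀ (dilation ε A)).toReal :=
    ENNReal.toReal_mono (measure_ne_top _ _) (measure_mono hdil)
  have h₁ : (ρ₁ (erosion ε A)).toReal ≤ (ρ₁ (erosion ε B)).toReal :=
    ENNReal.toReal_mono (measure_ne_top _ _) (measure_mono hero)
  unfold morphRisk
  gcongr

theorem intermediate_sets_minimize_general {X : Type*} [MetricSpace X] [MeasurableSpace X]
    (ρ₀ ρ₁ : Measure X) [IsProbabilityMeasure ρ₀] [IsProbabilityMeasure ρ₁]
    (w₀ w₁ : ℝ) (hw₀ : 0 ≤ w₀) (hw₁ : 0 ≤ w₁)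
    (ε : ℝ) (A : Set X)
    (hAmin : ∀ C : Set X, MeasurableSet C →
      morphRisk ρ₀ ρ₁ w₀ w₁ ε A ≤ morphRisk ρ₀ ρ₁ w₀ w₁ ε C)
    (B : Set X)
    (hB₁ : opening ε A ⊆ B) (hB₂ : B ⊆ closing ε A) :
    ∀ C : Set X, MeasurableSet C →
      morphRisk ρ₀ ρ₁ w₀ w₁ ε B ≤ morphRisk ρ₀ ρ₁ w₀ w₁ ε C := by
  intro C hC
  have gc := dilation_erosion_gc (X := X) ε
  have hdil : dilation ε B ⊆ dilation ε A := dilation_closing ε A ▸ gc.monotone_l hB₂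
  have hero : erosion ε A ⊆ erosion ε B := erosion_opening ε A ▸ gc.monotone_u hB₁
  exact (morphRisk_le_of_dilation_subset_of_erosion_subset hw₀ hw₁ hdil hero).trans (hAmin C hC)

theorem intermediate_sets_minimize {X : Type*} [MetricSpace X] [MeasurableSpace X]
    [BorelSpace X]
    (ρ₀ ρ₁ : Measure X) [IsProbabilityMeasure ρ₀] [IsProbabilityMeasure ρ₁]
    (w₀ w₁ : ℝ) (hw₀ : 0 ≤ w₀) (hw₁ : 0 ≤ w₁)
    (ε : ℝ) (hε : 0 < ε) (A : Set X) (hA : MeasurableSet A)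
    (hAmin : ∀ C : Set X, MeasurableSet C →
      morphRisk ρ₀ ρ₁ w₀ w₁ ε A ≤ morphRisk ρ₀ ρ₁ w₀ w₁ ε C)
    (B : Set X) (hBmeas : MeasurableSet B)
    (hB₁ : opening ε A ⊆ B) (hB₂ : B ⊆ closing ε A) :
    ∀ C : Set X, MeasurableSet C →
      morphRisk ρ₀ ρ₁ w₀ w₁ ε B ≤ morphRisk ρ₀ ρ₁ w₀ w₁ ε C :=
  intermediate_sets_minimize_general ρ₀ ρ₁ w₀ w₁ hw₀ hw₁ ε A hAmin B hB₁ hB₂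
end
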